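/- Let τ > 0, ε > 0, let α : [0,τ] → ℝ be continuous, and let ū : [0,L]×[0,τ] → ℝ be twice continuously differentiable with ū(0,t) = ū(L,t) = 0 for all t ∈ [0,τ], satisfying the slow-time deterministic equation ε·∂_t ū = ∂_x² ū − g·ū + α(t)·ū − ū³ on [0,L]×[0,τ]. Define the Lyapunov functional F_L(φ) := (1/2)∫₀^L ((φ')² + g·φ²) dx. Then for every t ∈ [0,τ]: F_L(ū(·,t)) ≤ exp((2/ε)∫₀^t (α(s) − λ_1) ds) · F_L(ū(·,0)). In particular, if α(s) ≤ λ_1 for all s ∈ [0,τ] and F_L(ū(·,0)) ≤ δ²/2, then F_L(ū(·,t)) ≤ δ²/2 for all t ∈ [0,τ], and if α(s) − λ_1 ≤ −c₁ < 0 then F_L(ū(·,t)) ≤ F_L(ū(·,0))·e^{−2c₁t/ε}, i.e. F_L decays exponentially. (This is the paper's Proposition 4.2.) -/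

import Mathlib

open MeasureTheory

/-- The `L²(0,L)` inner product `⟨f,h⟩ = ∫₀^L f·h dx`. -/
noncomputable def ip (L : ℝ) (f h : ℝ → ℝ) : ℝ := ∫ x in (0:ℝ)..L, f x * h x

/-- The Lyapunov functional `F_L(ū(·,t)) = (1/2)∫₀^L ((∂_x ū)² + g·ū²) dx`. -/
noncomputable def lyapF (L : ℝ) (g : ℝ → ℝ) (u : ℝ → ℝ → ℝ) (t : ℝ) : ℝ :=
  (1 / 2) * ∫ x in (0:ℝ)..L, ((deriv (fun y => u y t) x) ^ 2 + g x * (u x t) ^ 2)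

open intervalIntegral Set

/-! ### Auxiliary toolkit -/

/-- directional derivative of `U` in direction `v`. -/
noncomputable def pd (U : ℝ × ℝ → ℝ) (v : ℝ × ℝ) (p : ℝ × ℝ) : ℝ := fderiv ℝ U p v

/-- second directional derivative: differentiate `pd U v` in direction `w`. -/
noncomputable def pd2 (U : ℝ × ℝ → ℝ) (v w : ℝ × ℝ) (p : ℝ × ℝ) : ℝ :=
  fderiv ℝ (fderiv ℝ U) p w v

section partials
variable {U : ℝ × ℝ → ℝ} (hU : ContDiff ℝ 2 U)
include hU

lemma pd_cont (v : ℝ × ℝ) : Continuous (pd U v) :=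
  (ContinuousLinearMap.apply ℝ ℝ v).continuous.comp (hU.continuous_fderiv (by norm_num))

lemma pd2_cont (v w : ℝ × ℝ) : Continuous (pd2 U v w) := by
  have h1 : ContDiff ℝ 1 (fderiv ℝ U) := hU.fderiv_right (by norm_num)
  exact (ContinuousLinearMap.apply ℝ ℝ v).continuous.comp
    ((ContinuousLinearMap.apply ℝ (ℝ × ℝ →L[ℝ] ℝ) w).continuous.comp
      (h1.continuous_fderiv (by norm_num)))

lemma hasDerivAt_slice_x (x t : ℝ) :
    HasDerivAt (fun y => U (y, t)) (pd U (1, 0) (x, t)) x := by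
  have hline : HasDerivAt (fun y : ℝ => (y, t)) ((1 : ℝ), (0 : ℝ)) x := by
    simpa using (HasDerivAt.prodMk (hasDerivAt_id x) (hasDerivAt_const x t))
  have hF : HasFDerivAt U (fderiv ℝ U (x, t)) (x, t) :=
    (hU.differentiable (by norm_num) (x, t)).hasFDerivAt
  exact hF.comp_hasDerivAt x hline

lemma hasDerivAt_slice_t (x t : ℝ) :
    HasDerivAt (fun s => U (x, s)) (pd U (0, 1) (x, t)) t := by
  have hline : HasDerivAt (fun s : ℝ => (x, s)) ((0 : ℝ), (1 : ℝ)) t := by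
    simpa using (HasDerivAt.prodMk (hasDerivAt_const t x) (hasDerivAt_id t))
  have hF : HasFDerivAt U (fderiv ℝ U (x, t)) (x, t) :=
    (hU.differentiable (by norm_num) (x, t)).hasFDerivAt
  exact hF.comp_hasDerivAt t hline

lemma hasDerivAt_pd_slice_x (v : ℝ × ℝ) (x t : ℝ) :
    HasDerivAt (fun y => pd U v (y, t)) (pd2 U v (1, 0) (x, t)) x := by
  have h1 : ContDiff ℝ 1 (fderiv ℝ U) := hU.fderiv_right (by norm_num)
  have hline : HasDerivAt (fun y : ℝ => (y, t)) ((1 : ℝ), (0 : ℝ)) x := by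
    simpa using (HasDerivAt.prodMk (hasDerivAt_id x) (hasDerivAt_const x t))
  have hF : HasFDerivAt (fderiv ℝ U) (fderiv ℝ (fderiv ℝ U) (x, t)) (x, t) :=
    (h1.differentiable (by norm_num) (x, t)).hasFDerivAt
  have := ((ContinuousLinearMap.apply ℝ ℝ v).hasFDerivAt.comp (x, t) hF).comp_hasDerivAt x hline
  simpa [pd, pd2, Function.comp_def] using this

lemma hasDerivAt_pd_slice_t (v : ℝ × ℝ) (x t : ℝ) :
    HasDerivAt (fun s => pd U v (x, s)) (pd2 U v (0, 1) (x, t)) t := by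
  have h1 : ContDiff ℝ 1 (fderiv ℝ U) := hU.fderiv_right (by norm_num)
  have hline : HasDerivAt (fun s : ℝ => (x, s)) ((0 : ℝ), (1 : ℝ)) t := by
    simpa using (HasDerivAt.prodMk (hasDerivAt_const t x) (hasDerivAt_id t))
  have hF : HasFDerivAt (fderiv ℝ U) (fderiv ℝ (fderiv ℝ U) (x, t)) (x, t) :=
    (h1.differentiable (by norm_num) (x, t)).hasFDerivAt
  have := ((ContinuousLinearMap.apply ℝ ℝ v).hasFDerivAt.comp (x, t) hF).comp_hasDerivAt t hline
  simpa [pd, pd2, Function.comp_def] using this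

lemma pd2_symm (v w p : ℝ × ℝ) : pd2 U v w p = pd2 U w v p := by
  have h1 : ContDiff ℝ 1 (fderiv ℝ U) := hU.fderiv_right (by norm_num)
  have hf' : ∀ q, HasFDerivAt U (fderiv ℝ U q) q := fun q =>
    (hU.differentiable (by norm_num) q).hasFDerivAt
  have hf'' : HasFDerivAt (fderiv ℝ U) (fderiv ℝ (fderiv ℝ U) p) p :=
    (h1.differentiable (by norm_num) p).hasFDerivAt
  have := second_derivative_symmetric hf' hf'' w v
  simpa [pd2] using this

end partials

lemma my_nonpos (f : ℝ → ℝ) (a b : ℝ) (hab : a ≤ b) (h : ∀ x ∈ Icc a b, f x ≤ 0) :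
    (∫ x in a..b, f x) ≤ 0 := by
  have h1 : (0:ℝ) ≤ ∫ x in a..b, -f x :=
    intervalIntegral.integral_nonneg (μ := volume) hab (fun u hu => by simpa using h u hu)
  rw [intervalIntegral.integral_neg] at h1
  linarith

/-- integration by parts -/
lemma ibp {L : ℝ} (hL : 0 ≤ L) (f h f' h' : ℝ → ℝ)
    (hf : ∀ x ∈ Icc (0:ℝ) L, HasDerivAt f (f' x) x)
    (hh : ∀ x ∈ Icc (0:ℝ) L, HasDerivAt h (h' x) x)
    (hf' : ContinuousOn f' (Icc 0 L)) (hh' : ContinuousOn h' (Icc 0 L)) :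
    ∫ x in (0:ℝ)..L, f' x * h x
      = f L * h L - f 0 * h 0 - ∫ x in (0:ℝ)..L, f x * h' x := by
  have hcf : ContinuousOn f (Icc 0 L) := fun x hx => (hf x hx).continuousAt.continuousWithinAt
  have hch : ContinuousOn h (Icc 0 L) := fun x hx => (hh x hx).continuousAt.continuousWithinAt
  have i1 : IntervalIntegrable (fun x => f' x * h x) volume 0 L :=
    ((hf'.mul hch).mono (by rw [uIcc_of_le hL])).intervalIntegrable
  have i2 : IntervalIntegrable (fun x => f x * h' x) volume 0 L :=
    ((hcf.mul hh').mono (by rw [uIcc_of_le hL])).intervalIntegrable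
  have key : ∫ x in (0:ℝ)..L, (f' x * h x + f x * h' x)
      = f L * h L - f 0 * h 0 := by
    apply intervalIntegral.integral_eq_sub_of_hasDerivAt
    · intro x hx
      rw [uIcc_of_le hL] at hx
      exact (hf x hx).mul (hh x hx)
    · exact i1.add i2
  have := intervalIntegral.integral_add i1 i2
  linarith [this, key]

lemma bessel_bound {L : ℝ} (hL : 0 ≤ L) (e : ℕ → ℝ → ℝ)
    (he_cont : ∀ j, Continuous (e j))
    (he_on : ∀ i j, ip L (e i) (e j) = if i = j then 1 else 0)
    (f : ℝ → ℝ) (hf : Continuous f) (n : ℕ) :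
    ∑ j ∈ Finset.range n, (ip L f (e j))^2 ≤ ip L f f := by
  set c : ℕ → ℝ := fun j => ip L f (e j) with hc
  set s : ℝ → ℝ := fun x => ∑ j ∈ Finset.range n, c j * e j x with hs
  have hs_cont : Continuous s :=
    continuous_finset_sum _ (fun j _ => continuous_const.mul (he_cont j))
  have h0 : (0:ℝ) ≤ ∫ x in (0:ℝ)..L, (f x - s x) * (f x - s x) :=
    intervalIntegral.integral_nonneg hL (fun x _ => mul_self_nonneg _)
  have ise : ∀ i, ∫ x in (0:ℝ)..L, s x * e i x = if i ∈ Finset.range n then c i else 0 := by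
    intro i
    have : (fun x => s x * e i x) = fun x => ∑ j ∈ Finset.range n, c j * (e j x * e i x) := by
      funext x; rw [hs]; rw [Finset.sum_mul]; exact Finset.sum_congr rfl fun j _ => by ring
    rw [this, intervalIntegral.integral_finset_sum (fun j _ =>
      (continuous_const.fun_mul ((he_cont j).fun_mul (he_cont i))).intervalIntegrable 0 L)]
    rw [Finset.sum_congr rfl (fun j (hj : j ∈ Finset.range n) => by
      rw [intervalIntegral.integral_const_mul,
        show (∫ x in (0:ℝ)..L, e j x * e i x) = ip L (e j) (e i) from rfl, he_on j i] :
      ∀ j ∈ Finset.range n, (∫ x in (0:ℝ)..L, c j * (e j x * e i x))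
        = c j * if j = i then 1 else 0)]
    by_cases hi : i ∈ Finset.range n
    · rw [if_pos hi, Finset.sum_eq_single i (fun j _ hji => by simp [hji])
        (fun h => absurd hi h)]
      simp
    · rw [if_neg hi]
      apply Finset.sum_eq_zero
      intro j hj
      have : j ≠ i := fun h => hi (h ▸ hj)
      simp [this]
  have ifs : ∫ x in (0:ℝ)..L, f x * s x = ∑ j ∈ Finset.range n, c j ^ 2 := by
    have : (fun x => f x * s x) = fun x => ∑ j ∈ Finset.range n, c j * (f x * e j x) := by
      funext x; rw [hs, Finset.mul_sum]; exact Finset.sum_congr rfl fun j _ => by ring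
    rw [this, intervalIntegral.integral_finset_sum (fun j _ =>
      (continuous_const.fun_mul (hf.fun_mul (he_cont j))).intervalIntegrable 0 L)]
    exact Finset.sum_congr rfl fun j _ => by
      rw [intervalIntegral.integral_const_mul]; rw [sq]; rfl
  have iss : ∫ x in (0:ℝ)..L, s x * s x = ∑ j ∈ Finset.range n, c j ^ 2 := by
    have : (fun x => s x * s x) = fun x => ∑ j ∈ Finset.range n, c j * (s x * e j x) := by
      funext x; conv_lhs => rw [hs]
      rw [show (∑ j ∈ Finset.range n, c j * e j x) * s x
          = ∑ j ∈ Finset.range n, c j * (s x * e j x) by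
        rw [Finset.sum_mul]; exact Finset.sum_congr rfl fun j _ => by ring]
    rw [this, intervalIntegral.integral_finset_sum (fun j _ =>
      (continuous_const.fun_mul (hs_cont.fun_mul (he_cont j))).intervalIntegrable 0 L)]
    exact Finset.sum_congr rfl fun j hj => by
      rw [intervalIntegral.integral_const_mul, ise j, if_pos hj, sq]
  have expand : ∫ x in (0:ℝ)..L, (f x - s x) * (f x - s x)
      = ip L f f - ∑ j ∈ Finset.range n, c j ^ 2 := by
    have e1 : (fun x => (f x - s x) * (f x - s x))
        = fun x => f x * f x - 2 * (f x * s x) + s x * s x := by funext x; ring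
    have i1 : IntervalIntegrable (fun x => f x * f x) volume 0 L :=
      (hf.mul hf).intervalIntegrable 0 L
    have i2 : IntervalIntegrable (fun x => 2 * (f x * s x)) volume 0 L :=
      (continuous_const.mul (hf.mul hs_cont)).intervalIntegrable 0 L
    have i3 : IntervalIntegrable (fun x => s x * s x) volume 0 L :=
      (hs_cont.mul hs_cont).intervalIntegrable 0 L
    rw [e1, intervalIntegral.integral_add (i1.sub i2) i3,
      intervalIntegral.integral_sub i1 i2, intervalIntegral.integral_const_mul, ifs, iss]
    have : ip L f f = ∫ x in (0:ℝ)..L, f x * f x := rfl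
    rw [← this]; ring
  rw [expand] at h0
  show ∑ j ∈ Finset.range n, c j ^ 2 ≤ ip L f f
  linarith

lemma bessel_summable {L : ℝ} (hL : 0 ≤ L) (e : ℕ → ℝ → ℝ)
    (he_cont : ∀ j, Continuous (e j))
    (he_on : ∀ i j, ip L (e i) (e j) = if i = j then 1 else 0)
    (f : ℝ → ℝ) (hf : Continuous f) :
    Summable (fun j => (ip L f (e j))^2) :=
  summable_of_sum_range_le (fun _ => sq_nonneg _)
    (fun n => bessel_bound hL e he_cont he_on f hf n)

lemma cross_parseval {L : ℝ} (hL : 0 ≤ L) (e : ℕ → ℝ → ℝ)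
    (he_cont : ∀ j, Continuous (e j))
    (he_on : ∀ i j, ip L (e i) (e j) = if i = j then 1 else 0)
    (hpars : ∀ f : ℝ → ℝ, Continuous f → f 0 = 0 → f L = 0 →
      ip L f f = ∑' j, (ip L f (e j)) ^ 2)
    (f h : ℝ → ℝ) (hf : Continuous f) (hf0 : f 0 = 0) (hfL : f L = 0)
    (hh : Continuous h) (hh0 : h 0 = 0) (hhL : h L = 0) :
    Summable (fun j => ip L f (e j) * ip L h (e j)) ∧
    ip L f h = ∑' j, ip L f (e j) * ip L h (e j) := by
  set a : ℕ → ℝ := fun j => ip L f (e j) with ha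
  set b : ℕ → ℝ := fun j => ip L h (e j) with hb
  have hfh : Continuous (fun x => f x + h x) := hf.add hh
  have hfmh : Continuous (fun x => f x - h x) := hf.sub hh
  have key_add : ∀ j, ip L (fun x => f x + h x) (e j) = a j + b j := by
    intro j
    show (∫ x in (0:ℝ)..L, (f x + h x) * e j x) = _
    rw [show (fun x => (f x + h x) * e j x) = fun x => f x * e j x + h x * e j x by
      funext x; ring]
    rw [intervalIntegral.integral_add (f := fun x => f x * e j x) (g := fun x => h x * e j x)
      ((hf.mul (he_cont j)).intervalIntegrable 0 L)
      ((hh.mul (he_cont j)).intervalIntegrable 0 L)]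
    rfl
  have key_sub : ∀ j, ip L (fun x => f x - h x) (e j) = a j - b j := by
    intro j
    show (∫ x in (0:ℝ)..L, (f x - h x) * e j x) = _
    rw [show (fun x => (f x - h x) * e j x) = fun x => f x * e j x - h x * e j x by
      funext x; ring]
    rw [intervalIntegral.integral_sub (f := fun x => f x * e j x) (g := fun x => h x * e j x)
      ((hf.mul (he_cont j)).intervalIntegrable 0 L)
      ((hh.mul (he_cont j)).intervalIntegrable 0 L)]
    rfl
  have p1 : ip L (fun x => f x + h x) (fun x => f x + h x) = ∑' j, (a j + b j)^2 := by
    rw [hpars _ hfh (by simp [hf0, hh0]) (by simp [hfL, hhL])]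
    exact tsum_congr fun j => by rw [key_add j]
  have p2 : ip L (fun x => f x - h x) (fun x => f x - h x) = ∑' j, (a j - b j)^2 := by
    rw [hpars _ hfmh (by simp [hf0, hh0]) (by simp [hfL, hhL])]
    exact tsum_congr fun j => by rw [key_sub j]
  have s1 : Summable (fun j => (a j + b j)^2) := by
    have := bessel_summable hL e he_cont he_on _ hfh
    refine this.congr fun j => by rw [key_add j]
  have s2 : Summable (fun j => (a j - b j)^2) := by
    have := bessel_summable hL e he_cont he_on _ hfmh
    refine this.congr fun j => by rw [key_sub j]
  have sab : Summable (fun j => a j * b j) := by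
    have heq : (fun j => a j * b j) = fun j => ((a j + b j)^2 - (a j - b j)^2) / 4 :=
      funext fun j => by ring
    rw [heq]
    exact (s1.sub s2).div_const 4
  refine ⟨sab, ?_⟩
  have expand : ip L (fun x => f x + h x) (fun x => f x + h x)
      - ip L (fun x => f x - h x) (fun x => f x - h x) = 4 * ip L f h := by
    show (∫ x in (0:ℝ)..L, (f x + h x) * (f x + h x))
      - (∫ x in (0:ℝ)..L, (f x - h x) * (f x - h x)) = _
    rw [← intervalIntegral.integral_sub (f := fun x => (f x + h x) * (f x + h x))
      (g := fun x => (f x - h x) * (f x - h x)) ((hfh.mul hfh).intervalIntegrable 0 L)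
      ((hfmh.mul hfmh).intervalIntegrable 0 L)]
    rw [show (fun x => (f x + h x) * (f x + h x) - (f x - h x) * (f x - h x))
      = fun x => 4 * (f x * h x) by funext x; ring]
    rw [intervalIntegral.integral_const_mul]
    rfl
  have tsum_eq : (∑' j, (a j + b j)^2) - (∑' j, (a j - b j)^2) = 4 * ∑' j, a j * b j := by
    rw [← Summable.tsum_sub s1 s2, ← tsum_mul_left]
    exact tsum_congr fun j => by ring
  have : 4 * ip L f h = 4 * ∑' j, a j * b j := by
    rw [← expand, p1, p2, tsum_eq]
  linarith

set_option maxHeartbeats 1000000 in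
/-- Proposition 4.2 of the paper. -/
theorem stmt_8
    (L : ℝ) (hL : 0 < L)
    (g : ℝ → ℝ) (hg_cont : ContinuousOn g (Set.Icc 0 L))
    (hg_nonneg : ∀ x ∈ Set.Icc 0 L, 0 ≤ g x)
    -- the Dirichlet eigenbasis `(e_j, λ_j)` of `∂_x² − g`; `λ₁ = lam 0`
    (e : ℕ → ℝ → ℝ) (lam : ℕ → ℝ)
    (hlam_mono : StrictMono lam)
    (he_smooth : ∀ j, ContDiff ℝ 2 (e j))
    (he_bd0 : ∀ j, e j 0 = 0) (he_bdL : ∀ j, e j L = 0)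
    (he_eig : ∀ j, ∀ x ∈ Set.Icc 0 L,
      -(deriv (deriv (e j)) x) + g x * e j x = lam j * e j x)
    (he_on : ∀ i j, ip L (e i) (e j) = if i = j then 1 else 0)
    (he_parseval : ∀ f : ℝ → ℝ, Continuous f → f 0 = 0 → f L = 0 →
      ip L f f = ∑' j, (ip L f (e j)) ^ 2)
    (τ ε : ℝ) (hτ : 0 < τ) (hε : 0 < ε)
    (α : ℝ → ℝ) (hα : ContinuousOn α (Set.Icc 0 τ))
    (u : ℝ → ℝ → ℝ)
    (hu_smooth : ContDiff ℝ 2 (fun p : ℝ × ℝ => u p.1 p.2))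
    (hu_bd0 : ∀ t ∈ Set.Icc 0 τ, u 0 t = 0)
    (hu_bdL : ∀ t ∈ Set.Icc 0 τ, u L t = 0)
    (hu_pde : ∀ x ∈ Set.Icc 0 L, ∀ t ∈ Set.Icc 0 τ,
      ε * deriv (fun s => u x s) t =
        deriv (deriv (fun y => u y t)) x - g x * u x t + α t * u x t - (u x t) ^ 3) :
    (∀ t ∈ Set.Icc 0 τ,
      lyapF L g u t ≤
        Real.exp ((2 / ε) * ∫ s in (0:ℝ)..t, (α s - lam 0)) * lyapF L g u 0) ∧
    ((∀ s ∈ Set.Icc 0 τ, α s ≤ lam 0) →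
      ∀ δ : ℝ, lyapF L g u 0 ≤ δ ^ 2 / 2 →
        ∀ t ∈ Set.Icc 0 τ, lyapF L g u t ≤ δ ^ 2 / 2) ∧
    (∀ c₁ : ℝ, 0 < c₁ → (∀ s ∈ Set.Icc 0 τ, α s - lam 0 ≤ -c₁) →
      ∀ t ∈ Set.Icc 0 τ,
        lyapF L g u t ≤ lyapF L g u 0 * Real.exp (-2 * c₁ * t / ε)) := by
  have hL' : (0:ℝ) ≤ L := hL.le
  set W : ℝ × ℝ → ℝ := fun p => u p.1 p.2 with hW
  have hU : ContDiff ℝ 2 W := hu_smooth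
  set ux : ℝ → ℝ → ℝ := fun x t => pd W (1,0) (x,t) with hux_def
  set ut : ℝ → ℝ → ℝ := fun x t => pd W (0,1) (x,t) with hut_def
  set uxx : ℝ → ℝ → ℝ := fun x t => pd2 W (1,0) (1,0) (x,t) with huxx_def
  set uxt : ℝ → ℝ → ℝ := fun x t => pd2 W (1,0) (0,1) (x,t) with huxt_def
  -- basic slice derivatives
  have hux_hd : ∀ x t, HasDerivAt (fun y => u y t) (ux x t) x := by
    intro x t
    simpa using hasDerivAt_slice_x hU x t
  have hut_hd : ∀ x t, HasDerivAt (fun s => u x s) (ut x t) t := by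
    intro x t
    simpa using hasDerivAt_slice_t hU x t
  have hux_x_hd : ∀ x t, HasDerivAt (fun y => ux y t) (uxx x t) x := by
    intro x t
    simpa using hasDerivAt_pd_slice_x hU (1,0) x t
  have hux_t_hd : ∀ x t, HasDerivAt (fun s => ux x s) (uxt x t) t := by
    intro x t
    simpa using hasDerivAt_pd_slice_t hU (1,0) x t
  have hut_x_hd : ∀ x t, HasDerivAt (fun y => ut y t) (uxt x t) x := by
    intro x t
    have h1 := hasDerivAt_pd_slice_x hU (0,1) x t
    rw [pd2_symm hU (0,1) (1,0) (x,t)] at h1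
    simpa using h1
  -- deriv translations
  have hderiv_x : ∀ t, (deriv (fun y => u y t)) = fun y => ux y t :=
    fun t => funext fun x => (hux_hd x t).deriv
  have hderiv_t : ∀ x t, deriv (fun s => u x s) t = ut x t :=
    fun x t => (hut_hd x t).deriv
  have hderiv_xx : ∀ x t, deriv (deriv (fun y => u y t)) x = uxx x t := by
    intro x t; rw [hderiv_x t]; exact (hux_x_hd x t).deriv
  -- joint continuity
  have hu_c : Continuous (fun p : ℝ × ℝ => u p.1 p.2) := hu_smooth.continuous
  have hux_c : Continuous (fun p : ℝ × ℝ => ux p.1 p.2) := by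
    have := pd_cont hU ((1:ℝ),(0:ℝ)); exact this.comp (continuous_fst.prodMk continuous_snd)
  have hut_c : Continuous (fun p : ℝ × ℝ => ut p.1 p.2) := by
    have := pd_cont hU ((0:ℝ),(1:ℝ)); exact this.comp (continuous_fst.prodMk continuous_snd)
  have huxx_c : Continuous (fun p : ℝ × ℝ => uxx p.1 p.2) := by
    have := pd2_cont hU ((1:ℝ),(0:ℝ)) ((1:ℝ),(0:ℝ))
    exact this.comp (continuous_fst.prodMk continuous_snd)
  have huxt_c : Continuous (fun p : ℝ × ℝ => uxt p.1 p.2) := by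
    have := pd2_cont hU ((1:ℝ),(0:ℝ)) ((0:ℝ),(1:ℝ))
    exact this.comp (continuous_fst.prodMk continuous_snd)
  -- slice continuity in x
  have slx : ∀ (F : ℝ → ℝ → ℝ), Continuous (fun p : ℝ × ℝ => F p.1 p.2) →
      ∀ t, Continuous (fun x => F x t) := fun F hF t =>
    hF.comp (continuous_id.prodMk continuous_const)
  have slt : ∀ (F : ℝ → ℝ → ℝ), Continuous (fun p : ℝ × ℝ => F p.1 p.2) →
      ∀ x, Continuous (fun t => F x t) := fun F hF x =>
    hF.comp (continuous_const.prodMk continuous_id)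
  -- extended coefficient functions
  set gE : ℝ → ℝ := fun x => g (min (max x 0) L) with hgE_def
  have hclampL : ∀ x : ℝ, min (max x 0) L ∈ Icc (0:ℝ) L := fun x =>
    ⟨le_min (le_max_right x 0) hL', min_le_right _ _⟩
  have hgE_c : Continuous gE :=
    hg_cont.comp_continuous ((continuous_id.max continuous_const).min continuous_const) hclampL
  have hgE_eq : ∀ x ∈ Icc (0:ℝ) L, gE x = g x := by
    intro x hx
    simp only [hgE_def]
    rw [max_eq_left hx.1, min_eq_left hx.2]
  have hgE_nn : ∀ x, 0 ≤ gE x := fun x => hg_nonneg _ (hclampL x)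
  set αE : ℝ → ℝ := fun s => α (min (max s 0) τ) with hαE_def
  have hclampτ : ∀ s : ℝ, min (max s 0) τ ∈ Icc (0:ℝ) τ := fun s =>
    ⟨le_min (le_max_right s 0) hτ.le, min_le_right _ _⟩
  have hαE_c : Continuous αE := hα.comp_continuous ((continuous_id.max continuous_const).min continuous_const) hclampτ
  have hαE_eq : ∀ s ∈ Icc (0:ℝ) τ, αE s = α s := by
    intro s hs
    simp only [hαE_def]
    rw [max_eq_left hs.1, min_eq_left hs.2]
  -- time derivative of u vanishes on the lateral boundary
  have hut_bd : ∀ z : ℝ, (∀ t ∈ Icc (0:ℝ) τ, u z t = 0) →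
      ∀ t ∈ Icc (0:ℝ) τ, ut z t = 0 := by
    intro z hz
    have hIoo : ∀ t ∈ Ioo (0:ℝ) τ, ut z t = 0 := by
      intro t ht
      have hev : (fun s => u z s) =ᶠ[nhds t] fun _ => (0:ℝ) :=
        Filter.eventuallyEq_of_mem (Ioo_mem_nhds ht.1 ht.2)
          (fun s hs => hz s ⟨le_of_lt hs.1, le_of_lt hs.2⟩)
      have h1 : HasDerivAt (fun s => u z s) (ut z t) t := hut_hd z t
      have h2 : HasDerivAt (fun s => u z s) 0 t :=
        (hasDerivAt_const t (0:ℝ)).congr_of_eventuallyEq hev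
      exact h1.unique h2
    intro t ht
    have hc : Continuous (fun s => ut z s) := slt ut hut_c z
    have heq : EqOn (fun s => ut z s) (fun _ => (0:ℝ)) (closure (Ioo (0:ℝ) τ)) :=
      Set.EqOn.closure (fun s hs => hIoo s hs) hc continuous_const
    rw [closure_Ioo hτ.ne] at heq
    exact heq ht
  have hut_bd0 : ∀ t ∈ Icc (0:ℝ) τ, ut 0 t = 0 := hut_bd 0 hu_bd0
  have hut_bdL : ∀ t ∈ Icc (0:ℝ) τ, ut L t = 0 := hut_bd L hu_bdL
  -- uxx vanishes on the lateral boundary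
  have huxx_bd0 : ∀ t ∈ Icc (0:ℝ) τ, uxx 0 t = 0 := by
    intro t ht
    have hp := hu_pde 0 (left_mem_Icc.mpr hL') t ht
    rw [hderiv_t 0 t, hderiv_xx 0 t, hu_bd0 t ht, hut_bd0 t ht] at hp
    simp at hp
    linarith
  have huxx_bdL : ∀ t ∈ Icc (0:ℝ) τ, uxx L t = 0 := by
    intro t ht
    have hp := hu_pde L (right_mem_Icc.mpr hL') t ht
    rw [hderiv_t L t, hderiv_xx L t, hu_bdL t ht, hut_bdL t ht] at hp
    simp at hp
    linarith
  -- the Lyapunov functional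
  set Fn : ℝ → ℝ := fun t => (1/2) * ∫ x in (0:ℝ)..L, (ux x t ^ 2 + gE x * (u x t)^2)
    with hFn_def
  have hlyap_eq : ∀ t, lyapF L g u t = Fn t := by
    intro t
    show (1 / 2) * (∫ x in (0:ℝ)..L, ((deriv (fun y => u y t) x) ^ 2 + g x * (u x t) ^ 2)) = _
    simp only [hFn_def]
    congr 1
    apply intervalIntegral.integral_congr
    intro x hx
    rw [uIcc_of_le hL'] at hx
    simp only [hderiv_x t, hgE_eq x hx]
  have hFn_nn : ∀ t, 0 ≤ Fn t := fun t =>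
    mul_nonneg (by norm_num) (intervalIntegral.integral_nonneg hL' fun x _ =>
      add_nonneg (sq_nonneg _) (mul_nonneg (hgE_nn x) (sq_nonneg _)))
  -- the derivative of Fn
  set DF : ℝ → ℝ := fun t =>
    (1/2) * ∫ x in (0:ℝ)..L, (2 * ux x t * uxt x t + gE x * (2 * u x t * ut x t))
    with hDF_def
  have hΦc : ∀ t, Continuous (fun x => ux x t ^ 2 + gE x * (u x t)^2) := fun t =>
    ((slx ux hux_c t).pow 2).add (hgE_c.mul ((slx u hu_c t).pow 2))
  have hΦ'c : Continuous (fun p : ℝ × ℝ =>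
      2 * ux p.1 p.2 * uxt p.1 p.2 + gE p.1 * (2 * u p.1 p.2 * ut p.1 p.2)) :=
    ((continuous_const.mul hux_c).mul huxt_c).add
      ((hgE_c.comp continuous_fst).mul ((continuous_const.mul hu_c).mul hut_c))
  have hFn_hd : ∀ t₀ : ℝ, HasDerivAt Fn (DF t₀) t₀ := by
    intro t₀
    obtain ⟨C, hC⟩ := (isCompact_Icc.prod isCompact_Icc :
        IsCompact (Icc (0:ℝ) L ×ˢ Icc (t₀-1) (t₀+1))).exists_bound_of_continuousOn
      hΦ'c.continuousOn
    have main := intervalIntegral.hasDerivAt_integral_of_dominated_loc_of_deriv_le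
      (μ := volume) (F := fun t x => ux x t ^ 2 + gE x * (u x t)^2)
      (F' := fun t x => 2 * ux x t * uxt x t + gE x * (2 * u x t * ut x t))
      (x₀ := t₀) (a := 0) (b := L) (bound := fun _ => C) (s := Metric.ball t₀ 1) (Metric.ball_mem_nhds t₀ one_pos)
      (Filter.Eventually.of_forall fun t => (hΦc t).aestronglyMeasurable)
      ((hΦc t₀).intervalIntegrable 0 L)
      (((continuous_const.mul (slx ux hux_c t₀)).mul (slx uxt huxt_c t₀)).add
        (hgE_c.mul ((continuous_const.mul (slx u hu_c t₀)).mul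
          (slx ut hut_c t₀)))).aestronglyMeasurable
      (ae_of_all _ ?_) intervalIntegrable_const (ae_of_all _ ?_)
    · exact main.2.const_mul (1/2)
    · intro x hx s hs
      rw [uIoc_of_le hL'] at hx
      rw [Metric.mem_ball, Real.dist_eq, abs_sub_lt_iff] at hs
      have hxm : x ∈ Icc (0:ℝ) L := ⟨hx.1.le, hx.2⟩
      have hsm : s ∈ Icc (t₀-1) (t₀+1) := ⟨by linarith [hs.1, hs.2], by linarith [hs.1, hs.2]⟩
      have := hC (x, s) ⟨hxm, hsm⟩
      simpa using this
    · intro x _ s _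
      have d1 := (hux_t_hd x s).pow 2
      have d2 := HasDerivAt.const_mul (gE x) ((hut_hd x s).pow 2)
      have h3 := d1.add d2
      have : HasDerivAt (fun s => ux x s ^ 2 + gE x * u x s ^ 2)
          (2 * ux x s * uxt x s + gE x * (2 * u x s * ut x s)) s := by
        refine h3.congr_deriv ?_
        push_cast
        ring
      exact this
  -- the key differential inequality
  have hDF_le : ∀ t ∈ Icc (0:ℝ) τ, DF t ≤ (2/ε) * (α t - lam 0) * Fn t := by
    intro t ht
    -- slice continuity at this time
    have hvx_c : Continuous (fun x => u x t) := slx u hu_c t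
    have huxs_c : Continuous (fun x => ux x t) := slx ux hux_c t
    have huts_c : Continuous (fun x => ut x t) := slx ut hut_c t
    have huxxs_c : Continuous (fun x => uxx x t) := slx uxx huxx_c t
    have huxts_c : Continuous (fun x => uxt x t) := slx uxt huxt_c t
    have hv0 : u 0 t = 0 := hu_bd0 t ht
    have hvL : u L t = 0 := hu_bdL t ht
    set Av : ℝ → ℝ := fun x => -uxx x t + gE x * u x t with hAv_def
    have hAv_c : Continuous Av := (huxxs_c.neg).add (hgE_c.mul hvx_c)
    have hAv0 : Av 0 = 0 := by
      simp only [hAv_def]; rw [huxx_bd0 t ht, hv0]; ring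
    have hAvL : Av L = 0 := by
      simp only [hAv_def]; rw [huxx_bdL t ht, hvL]; ring
    -- Step A : DF t = ∫ Av ∂ₜu
    have ibp1 : (∫ x in (0:ℝ)..L, uxt x t * ux x t)
        = - ∫ x in (0:ℝ)..L, ut x t * uxx x t := by
      have h := ibp hL' (fun x => ut x t) (fun x => ux x t) (fun x => uxt x t)
        (fun x => uxx x t) (fun x _ => hut_x_hd x t) (fun x _ => hux_x_hd x t)
        huxts_c.continuousOn huxxs_c.continuousOn
      simp only [hut_bd0 t ht, hut_bdL t ht] at h
      simpa using h
    have hDF_eq : DF t = ∫ x in (0:ℝ)..L, Av x * ut x t := by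
      simp only [hDF_def]
      rw [show (fun x => 2 * ux x t * uxt x t + gE x * (2 * u x t * ut x t))
          = fun x => 2 * (uxt x t * ux x t + gE x * u x t * ut x t) from
        funext fun x => by ring]
      rw [intervalIntegral.integral_const_mul]
      rw [intervalIntegral.integral_add (f := fun x => uxt x t * ux x t)
        (g := fun x => gE x * u x t * ut x t) ((huxts_c.mul huxs_c).intervalIntegrable 0 L)
        (((hgE_c.mul hvx_c).mul huts_c).intervalIntegrable 0 L)]
      rw [show (∫ x in (0:ℝ)..L, Av x * ut x t)
          = ∫ x in (0:ℝ)..L, (gE x * u x t * ut x t - ut x t * uxx x t) from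
        intervalIntegral.integral_congr (fun x _ => by simp only [hAv_def]; ring)]
      rw [intervalIntegral.integral_sub (f := fun x => gE x * u x t * ut x t)
        (g := fun x => ut x t * uxx x t) (((hgE_c.mul hvx_c).mul huts_c).intervalIntegrable 0 L)
        ((huts_c.mul huxxs_c).intervalIntegrable 0 L)]
      rw [ibp1]
      ring
    -- Step B : substitute the PDE
    have hPDE : ∀ x ∈ Icc (0:ℝ) L, ut x t = ε⁻¹ * (α t * u x t - Av x - u x t ^ 3) := by
      intro x hx
      have hp := hu_pde x hx t ht
      rw [hderiv_t x t, hderiv_xx x t, show g x = gE x from (hgE_eq x hx).symm] at hp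
      simp only [hAv_def]
      rw [inv_mul_eq_div, eq_div_iff hε.ne']
      linarith
    set IA2 : ℝ := ∫ x in (0:ℝ)..L, Av x * Av x with hIA2_def
    set IAu : ℝ := ∫ x in (0:ℝ)..L, Av x * u x t with hIAu_def
    set IAu3 : ℝ := ∫ x in (0:ℝ)..L, Av x * u x t ^ 3 with hIAu3_def
    have hDF_eq2 : DF t = ε⁻¹ * (α t * IAu - IA2 - IAu3) := by
      rw [hDF_eq]
      rw [show (∫ x in (0:ℝ)..L, Av x * ut x t)
          = ∫ x in (0:ℝ)..L, ε⁻¹ * (α t * (Av x * u x t) - Av x * Av x - Av x * u x t ^ 3) from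
        intervalIntegral.integral_congr (fun x hx => by
          rw [uIcc_of_le hL'] at hx
          rw [hPDE x hx]; ring)]
      rw [intervalIntegral.integral_const_mul]
      congr 1
      have iA : IntervalIntegrable (fun x => α t * (Av x * u x t)) volume 0 L :=
        (continuous_const.mul (hAv_c.mul hvx_c)).intervalIntegrable 0 L
      have iB : IntervalIntegrable (fun x => Av x * Av x) volume 0 L :=
        (hAv_c.mul hAv_c).intervalIntegrable 0 L
      have iC : IntervalIntegrable (fun x => Av x * u x t ^ 3) volume 0 L :=
        (hAv_c.mul (hvx_c.pow 3)).intervalIntegrable 0 L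
      rw [intervalIntegral.integral_sub (iA.sub iB) iC,
        intervalIntegral.integral_sub iA iB, intervalIntegral.integral_const_mul]
    -- Step C : ⟨Av, u⟩ = 2 Fn t
    have ibp2 : (∫ x in (0:ℝ)..L, ux x t * ux x t)
        = - ∫ x in (0:ℝ)..L, u x t * uxx x t := by
      have h := ibp hL' (fun x => u x t) (fun x => ux x t) (fun x => ux x t)
        (fun x => uxx x t) (fun x _ => hux_hd x t) (fun x _ => hux_x_hd x t)
        huxs_c.continuousOn huxxs_c.continuousOn
      simp only [hv0, hvL] at h
      simpa using h
    have hq1 : IAu = 2 * Fn t := by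
      have s1 : IAu = (∫ x in (0:ℝ)..L, gE x * u x t ^ 2)
          - ∫ x in (0:ℝ)..L, u x t * uxx x t := by
        simp only [hIAu_def]
        rw [show (fun x => Av x * u x t)
            = fun x => gE x * u x t ^ 2 - u x t * uxx x t from
          funext fun x => by simp only [hAv_def]; ring]
        exact intervalIntegral.integral_sub
          ((hgE_c.mul (hvx_c.pow 2)).intervalIntegrable 0 L)
          ((hvx_c.mul huxxs_c).intervalIntegrable 0 L)
      have s2 : Fn t = (1/2) * ((∫ x in (0:ℝ)..L, ux x t ^ 2)
          + ∫ x in (0:ℝ)..L, gE x * u x t ^ 2) := by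
        simp only [hFn_def]
        rw [intervalIntegral.integral_add (f := fun x => ux x t ^ 2)
          (g := fun x => gE x * u x t ^ 2) ((huxs_c.pow 2).intervalIntegrable 0 L)
          ((hgE_c.mul (hvx_c.pow 2)).intervalIntegrable 0 L)]
      have s3 : (∫ x in (0:ℝ)..L, ux x t ^ 2) = ∫ x in (0:ℝ)..L, ux x t * ux x t :=
        intervalIntegral.integral_congr (fun x _ => sq (ux x t) ▸ rfl)
      rw [s1, s2, s3]
      linarith [ibp2]
    -- Step D : ⟨Av, u³⟩ ≥ 0
    have hd3 : ∀ x, HasDerivAt (fun y => u y t ^ 3) (3 * u x t ^ 2 * ux x t) x := by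
      intro x
      have h := (hux_hd x t).pow 3
      norm_num at h
      exact h
    have ibp3 : (∫ x in (0:ℝ)..L, (3 * u x t ^ 2 * ux x t) * ux x t)
        = - ∫ x in (0:ℝ)..L, u x t ^ 3 * uxx x t := by
      have h := ibp hL' (fun x => u x t ^ 3) (fun x => ux x t)
        (fun x => 3 * u x t ^ 2 * ux x t) (fun x => uxx x t)
        (fun x _ => hd3 x) (fun x _ => hux_x_hd x t)
        ((continuous_const.mul (hvx_c.pow 2)).mul huxs_c).continuousOn
        huxxs_c.continuousOn
      simp only [hv0, hvL] at h
      simpa using h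
    have hq2 : 0 ≤ IAu3 := by
      have s1 : IAu3 = (∫ x in (0:ℝ)..L, gE x * u x t ^ 4)
          - ∫ x in (0:ℝ)..L, u x t ^ 3 * uxx x t := by
        simp only [hIAu3_def]
        rw [show (fun x => Av x * u x t ^ 3)
            = fun x => gE x * u x t ^ 4 - u x t ^ 3 * uxx x t from
          funext fun x => by simp only [hAv_def]; ring]
        exact intervalIntegral.integral_sub
          ((hgE_c.mul (hvx_c.pow 4)).intervalIntegrable 0 L)
          (((hvx_c.pow 3).mul huxxs_c).intervalIntegrable 0 L)
      have n1 : 0 ≤ ∫ x in (0:ℝ)..L, gE x * u x t ^ 4 :=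
        intervalIntegral.integral_nonneg hL' (fun x _ =>
          mul_nonneg (hgE_nn x) (by positivity))
      have n2 : 0 ≤ ∫ x in (0:ℝ)..L, (3 * u x t ^ 2 * ux x t) * ux x t := by
        rw [show (fun x => (3 * u x t ^ 2 * ux x t) * ux x t)
            = fun x => 3 * (u x t * ux x t) ^ 2 from funext fun x => by ring]
        exact intervalIntegral.integral_nonneg hL' (fun x _ => by positivity)
      linarith [ibp3]
    -- Step E : spectral inequality
    have he_cont' : ∀ j, Continuous (e j) := fun j => (he_smooth j).continuous
    have he_dC1 : ∀ j, ContDiff ℝ 1 (deriv (e j)) := by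
      intro j
      have h := he_smooth j
      rw [show (2 : WithTop ℕ∞) = 1 + 1 from rfl, contDiff_succ_iff_deriv] at h
      exact h.2.2
    have he_d1c : ∀ j, Continuous (deriv (e j)) := fun j => (he_dC1 j).continuous
    have he_d2c : ∀ j, Continuous (deriv (deriv (e j))) := fun j =>
      (contDiff_one_iff_deriv.mp (he_dC1 j)).2
    have he_d1 : ∀ j x, HasDerivAt (e j) (deriv (e j) x) x := fun j x =>
      ((he_smooth j).differentiable (by norm_num) x).hasDerivAt
    have he_d2 : ∀ j x, HasDerivAt (deriv (e j)) (deriv (deriv (e j)) x) x := fun j x =>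
      ((he_dC1 j).differentiable (by norm_num) x).hasDerivAt
    have hlam_nn : ∀ j, 0 ≤ lam j := by
      intro j
      have ibpE : (∫ x in (0:ℝ)..L, deriv (e j) x * deriv (e j) x)
          = - ∫ x in (0:ℝ)..L, e j x * deriv (deriv (e j)) x := by
        have h := ibp hL' (e j) (deriv (e j)) (deriv (e j)) (deriv (deriv (e j)))
          (fun x _ => he_d1 j x) (fun x _ => he_d2 j x)
          (he_d1c j).continuousOn (he_d2c j).continuousOn
        simp only [he_bd0 j, he_bdL j] at h
        simpa using h
      have hlamval : lam j = (∫ x in (0:ℝ)..L, gE x * e j x ^ 2)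
          - ∫ x in (0:ℝ)..L, e j x * deriv (deriv (e j)) x := by
        have h1 : ip L (e j) (e j) = 1 := by simpa using he_on j j
        have h2 : lam j = ∫ x in (0:ℝ)..L, lam j * (e j x * e j x) := by
          rw [intervalIntegral.integral_const_mul,
            show (∫ x in (0:ℝ)..L, e j x * e j x) = ip L (e j) (e j) from rfl, h1, mul_one]
        rw [h2, show (fun x => lam j * (e j x * e j x))
            = fun x => (lam j * e j x) * e j x from funext fun x => by ring,
          intervalIntegral.integral_congr (g := fun x =>
            gE x * e j x ^ 2 - e j x * deriv (deriv (e j)) x) (fun x hx => by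
          rw [uIcc_of_le hL'] at hx
          have h := he_eig j x hx
          have h' : -(deriv (deriv (e j)) x) + gE x * e j x = lam j * e j x := by
            rw [hgE_eq x hx]; exact h
          show (lam j * e j x) * e j x = gE x * e j x ^ 2 - e j x * deriv (deriv (e j)) x
          rw [← h']; ring)]
        exact intervalIntegral.integral_sub
          ((hgE_c.mul ((he_cont' j).pow 2)).intervalIntegrable 0 L)
          (((he_cont' j).mul (he_d2c j)).intervalIntegrable 0 L)
      have n1 : 0 ≤ ∫ x in (0:ℝ)..L, gE x * e j x ^ 2 :=
        intervalIntegral.integral_nonneg hL' (fun x _ =>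
          mul_nonneg (hgE_nn x) (sq_nonneg _))
      have n2 : 0 ≤ ∫ x in (0:ℝ)..L, deriv (e j) x * deriv (e j) x :=
        intervalIntegral.integral_nonneg hL' (fun x _ => mul_self_nonneg _)
      linarith [ibpE]
    have haj : ∀ j, ip L Av (e j) = lam j * ip L (fun x => u x t) (e j) := by
      intro j
      have ibpA : (∫ x in (0:ℝ)..L, deriv (e j) x * ux x t)
          = - ∫ x in (0:ℝ)..L, e j x * uxx x t := by
        have h := ibp hL' (e j) (fun x => ux x t) (deriv (e j)) (fun x => uxx x t)
          (fun x _ => he_d1 j x) (fun x _ => hux_x_hd x t)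
          (he_d1c j).continuousOn huxxs_c.continuousOn
        simp only [he_bd0 j, he_bdL j] at h
        simpa using h
      have ibpB : (∫ x in (0:ℝ)..L, ux x t * deriv (e j) x)
          = - ∫ x in (0:ℝ)..L, u x t * deriv (deriv (e j)) x := by
        have h := ibp hL' (fun x => u x t) (deriv (e j)) (fun x => ux x t)
          (fun x => deriv (deriv (e j)) x)
          (fun x _ => hux_hd x t) (fun x _ => he_d2 j x)
          huxs_c.continuousOn (he_d2c j).continuousOn
        simp only [hv0, hvL] at h
        simpa using h
      have comm1 : (∫ x in (0:ℝ)..L, deriv (e j) x * ux x t)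
          = ∫ x in (0:ℝ)..L, ux x t * deriv (e j) x :=
        intervalIntegral.integral_congr (fun x _ => mul_comm _ _)
      have E1 : ip L Av (e j) = (∫ x in (0:ℝ)..L, gE x * u x t * e j x)
          - ∫ x in (0:ℝ)..L, e j x * uxx x t := by
        show (∫ x in (0:ℝ)..L, Av x * e j x) = _
        rw [show (fun x => Av x * e j x)
            = fun x => gE x * u x t * e j x - e j x * uxx x t from
          funext fun x => by simp only [hAv_def]; ring]
        exact intervalIntegral.integral_sub
          (((hgE_c.mul hvx_c).mul (he_cont' j)).intervalIntegrable 0 L)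
          (((he_cont' j).mul huxxs_c).intervalIntegrable 0 L)
      have E5 : lam j * ip L (fun x => u x t) (e j)
          = (∫ x in (0:ℝ)..L, gE x * u x t * e j x)
            - ∫ x in (0:ℝ)..L, u x t * deriv (deriv (e j)) x := by
        have h2 : lam j * ip L (fun x => u x t) (e j)
            = ∫ x in (0:ℝ)..L, lam j * (u x t * e j x) := by
          rw [intervalIntegral.integral_const_mul]; rfl
        rw [h2, intervalIntegral.integral_congr (g := fun x =>
            gE x * u x t * e j x - u x t * deriv (deriv (e j)) x) (fun x hx => by
          rw [uIcc_of_le hL'] at hx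
          have h := he_eig j x hx
          have h' : -(deriv (deriv (e j)) x) + gE x * e j x = lam j * e j x := by
            rw [hgE_eq x hx]; exact h
          show lam j * (u x t * e j x)
            = gE x * u x t * e j x - u x t * deriv (deriv (e j)) x
          have h3 : lam j * (u x t * e j x) = u x t * (lam j * e j x) := by ring
          rw [h3, ← h']; ring)]
        exact intervalIntegral.integral_sub
          (((hgE_c.mul hvx_c).mul (he_cont' j)).intervalIntegrable 0 L)
          ((hvx_c.mul (he_d2c j)).intervalIntegrable 0 L)
      rw [E1, E5]
      have := comm1 ▸ ibpA
      linarith [ibpA, ibpB, comm1 ▸ ibpA]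
    have hbesselA : Summable (fun j => (ip L Av (e j))^2) :=
      bessel_summable hL' e he_cont' he_on Av hAv_c
    have hparsA : ip L Av Av = ∑' j, (ip L Av (e j))^2 :=
      he_parseval Av hAv_c hAv0 hAvL
    have hcross := cross_parseval hL' e he_cont' he_on he_parseval Av (fun x => u x t)
      hAv_c hAv0 hAvL hvx_c hv0 hvL
    set cf : ℕ → ℝ := fun j => ip L (fun x => u x t) (e j) with hcf_def
    have hS1 : Summable (fun j => (lam j * cf j)^2) :=
      hbesselA.congr (fun j => by rw [haj j])
    have htermwise : ∀ j, lam 0 * (lam j * cf j ^ 2) ≤ (lam j * cf j)^2 := by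
      intro j
      have h0j : lam 0 ≤ lam j := hlam_mono.monotone (Nat.zero_le j)
      have hX : 0 ≤ lam j * cf j ^ 2 := mul_nonneg (hlam_nn j) (sq_nonneg _)
      calc lam 0 * (lam j * cf j ^ 2) ≤ lam j * (lam j * cf j ^ 2) :=
            mul_le_mul_of_nonneg_right h0j hX
        _ = (lam j * cf j)^2 := by ring
    have hS2 : Summable (fun j => lam 0 * (lam j * cf j ^ 2)) :=
      Summable.of_nonneg_of_le (fun j => mul_nonneg (hlam_nn 0)
        (mul_nonneg (hlam_nn j) (sq_nonneg _))) htermwise hS1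
    have hsum_le := Summable.tsum_le_tsum htermwise hS2 hS1
    have eq1 : ip L Av Av = ∑' j, (lam j * cf j)^2 := by
      rw [hparsA]; exact tsum_congr fun j => by rw [haj j]
    have eq2 : (∑' j, lam 0 * (lam j * cf j ^ 2)) = lam 0 * ip L Av (fun x => u x t) := by
      rw [tsum_mul_left]
      congr 1
      rw [hcross.2]
      exact tsum_congr fun j => by rw [haj j]; ring
    have hq3 : lam 0 * ip L Av (fun x => u x t) ≤ ip L Av Av := by
      rw [← eq2, eq1]; exact hsum_le
    have hq3' : lam 0 * IAu ≤ IA2 := hq3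
    -- combine
    have hq1' : α t * IAu = α t * (2 * Fn t) := by rw [hq1]
    have hq3'' : lam 0 * (2 * Fn t) ≤ IA2 := by rw [← hq1]; exact hq3'
    have inner : α t * IAu - IA2 - IAu3 ≤ (α t - lam 0) * (2 * Fn t) := by
      nlinarith [hq1', hq3'', hq2]
    calc DF t = ε⁻¹ * (α t * IAu - IA2 - IAu3) := hDF_eq2
      _ ≤ ε⁻¹ * ((α t - lam 0) * (2 * Fn t)) :=
          mul_le_mul_of_nonneg_left inner (inv_nonneg.mpr hε.le)
      _ = 2/ε * (α t - lam 0) * Fn t := by ring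

  -- Grönwall argument
  set B : ℝ → ℝ := fun r => (2/ε) * ∫ s in (0:ℝ)..r, (αE s - lam 0) with hB_def
  have hB_hd : ∀ r, HasDerivAt B ((2/ε) * (αE r - lam 0)) r := by
    intro r
    have hcont : Continuous (fun s => αE s - lam 0) := hαE_c.sub continuous_const
    have hi : IntervalIntegrable (fun s => αE s - lam 0) volume 0 r :=
      hcont.intervalIntegrable 0 r
    exact (intervalIntegral.integral_hasDerivAt_right hi
      (hcont.stronglyMeasurableAtFilter _ _) hcont.continuousAt).const_mul (2/ε)
  set H : ℝ → ℝ := fun r => Fn r * Real.exp (-(B r)) with hH_def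
  have hH_hd : ∀ r, HasDerivAt H
      (DF r * Real.exp (-(B r)) + Fn r * (Real.exp (-(B r)) * (-((2/ε) * (αE r - lam 0))))) r :=
    fun r => (hFn_hd r).mul (((hB_hd r).neg).exp)
  have hH_anti : AntitoneOn H (Icc 0 τ) := by
    apply antitoneOn_of_deriv_nonpos (convex_Icc 0 τ)
    · have : Differentiable ℝ H := fun r => (hH_hd r).differentiableAt
      exact this.continuous.continuousOn
    · intro r _
      exact (hH_hd r).differentiableAt.differentiableWithinAt
    · intro r hr
      rw [interior_Icc] at hr
      have hrI : r ∈ Icc (0:ℝ) τ := Ioo_subset_Icc_self hr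
      rw [(hH_hd r).deriv]
      have h1 := hDF_le r hrI
      rw [hαE_eq r hrI]
      have hexp : 0 < Real.exp (-(B r)) := Real.exp_pos _
      nlinarith [mul_le_mul_of_nonneg_right h1 hexp.le]
  -- Part 1
  have part1 : ∀ t ∈ Icc (0:ℝ) τ,
      lyapF L g u t ≤ Real.exp ((2/ε) * ∫ s in (0:ℝ)..t, (α s - lam 0)) * lyapF L g u 0 := by
    intro t ht
    have hB_eq : B t = (2/ε) * ∫ s in (0:ℝ)..t, (α s - lam 0) := by
      simp only [hB_def]
      congr 1
      apply intervalIntegral.integral_congr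
      intro s hs
      rw [uIcc_of_le ht.1] at hs
      simp only [hαE_eq s ⟨hs.1, le_trans hs.2 ht.2⟩]
    have h0mem : (0:ℝ) ∈ Icc (0:ℝ) τ := left_mem_Icc.mpr hτ.le
    have hHle : H t ≤ H 0 := hH_anti h0mem ht ht.1
    have hH0 : H 0 = Fn 0 := by
      simp only [hH_def, hB_def, intervalIntegral.integral_same]
      simp
    rw [hlyap_eq t, hlyap_eq 0, ← hB_eq]
    have hkey : Fn t * Real.exp (-(B t)) ≤ Fn 0 := by rw [← hH0]; exact hHle
    calc Fn t = (Fn t * Real.exp (-(B t))) * Real.exp (B t) := by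
          rw [mul_assoc, ← Real.exp_add]; simp
      _ ≤ Fn 0 * Real.exp (B t) := mul_le_mul_of_nonneg_right hkey (Real.exp_pos _).le
      _ = Real.exp (B t) * Fn 0 := mul_comm _ _
  refine ⟨part1, ?_, ?_⟩
  -- Part 2
  · intro hαle δ hδ t ht
    have h1 := part1 t ht
    have hint : (∫ s in (0:ℝ)..t, (α s - lam 0)) ≤ 0 :=
      my_nonpos _ _ _ ht.1 (fun s hs => sub_nonpos.mpr (hαle s ⟨hs.1, le_trans hs.2 ht.2⟩))
    have h2 : (2/ε) * (∫ s in (0:ℝ)..t, (α s - lam 0)) ≤ 0 :=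
      mul_nonpos_of_nonneg_of_nonpos (by positivity) hint
    have hexp1 : Real.exp ((2/ε) * ∫ s in (0:ℝ)..t, (α s - lam 0)) ≤ 1 := by
      rw [show (1:ℝ) = Real.exp 0 by simp]
      exact Real.exp_le_exp.mpr h2
    have hF0 : 0 ≤ lyapF L g u 0 := by rw [hlyap_eq 0]; exact hFn_nn 0
    nlinarith [h1, hexp1, hF0, hδ]
  -- Part 3
  · intro c₁ _ hαc t ht
    have h1 := part1 t ht
    have hαint : IntervalIntegrable (fun s => α s - lam 0) volume 0 t := by
      apply ContinuousOn.intervalIntegrable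
      rw [uIcc_of_le ht.1]
      exact (hα.mono (Icc_subset_Icc_right ht.2)).sub continuousOn_const
    have hmono : (∫ s in (0:ℝ)..t, (α s - lam 0)) ≤ ∫ _ in (0:ℝ)..t, (-c₁ : ℝ) :=
      intervalIntegral.integral_mono_on ht.1 hαint intervalIntegrable_const
        (fun s hs => hαc s ⟨hs.1, le_trans hs.2 ht.2⟩)
    have hconst : (∫ _ in (0:ℝ)..t, (-c₁ : ℝ)) = t * (-c₁) := by simp
    have h2 : (2/ε) * (∫ s in (0:ℝ)..t, (α s - lam 0)) ≤ -2 * c₁ * t / ε := by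
      have := mul_le_mul_of_nonneg_left (hconst ▸ hmono) (by positivity : (0:ℝ) ≤ 2/ε)
      calc (2/ε) * (∫ s in (0:ℝ)..t, (α s - lam 0)) ≤ (2/ε) * (t * (-c₁)) := this
        _ = -2 * c₁ * t / ε := by ring
    have hexp : Real.exp ((2/ε) * ∫ s in (0:ℝ)..t, (α s - lam 0))
        ≤ Real.exp (-2 * c₁ * t / ε) := Real.exp_le_exp.mpr h2
    have hF0 : 0 ≤ lyapF L g u 0 := by rw [hlyap_eq 0]; exact hFn_nn 0
    calc lyapF L g u t ≤ Real.exp ((2/ε) * ∫ s in (0:ℝ)..t, (α s - lam 0)) * lyapF L g u 0 := h1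
      _ ≤ Real.exp (-2 * c₁ * t / ε) * lyapF L g u 0 :=
          mul_le_mul_of_nonneg_right hexp hF0
      _ = lyapF L g u 0 * Real.exp (-2 * c₁ * t / ε) := mul_comm _ _
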